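/- Let x ∈ {q,−1} and let (R^x_{u,w}) be the family of Kazhdan–Lusztig R^x-polynomials of a pircon system (P,S), and assume it satisfies the up-down symmetry. Then the map ι^x is an involution of 𝓜_P: ι^x(ι^x(m)) = m for every m ∈ 𝓜_P. -/

import Mathlib

open Polynomial LaurentPolynomial

noncomputable section

/-- A quasi special partial matching of a poset `P`: an involution `M : P → P` such that
for every `t`, either `M t ⋖ t`, `M t = t`, or `t ⋖ M t`, and whenever `t ⋖ u` and
`M t ≠ u`, then `M t < M u`. -/
def IsQSPM {P : Type*} [PartialOrder P] (M : P → P) : Prop :=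
  Function.Involutive M ∧
  (∀ t : P, M t ⋖ t ∨ M t = t ∨ t ⋖ M t) ∧
  ∀ t u : P, t ⋖ u → M t ≠ u → M t < M u

/-- A quasi special partial matching of the order ideal `P_{≤w}`. -/
def IsQSPMOn {P : Type*} [PartialOrder P] (w : P) (M : P → P) : Prop :=
  (∀ u : P, u ≤ w → M u ≤ w) ∧
  (∀ u : P, u ≤ w → M (M u) = u) ∧
  (∀ u : P, u ≤ w → M u ⋖ u ∨ M u = u ∨ u ⋖ M u) ∧
  ∀ u t : P, u ≤ w → t ≤ w → u ⋖ t → M u ≠ t → M u < M t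

/-- A special partial matching of the order ideal `P_{≤w}` (whose maximum is `w`). -/
def IsSPMOn {P : Type*} [PartialOrder P] (w : P) (M : P → P) : Prop :=
  IsQSPMOn w M ∧ M w ⋖ w

/-- A pircon: for every non-minimal `x`, the order ideal `P_{≤x}` is finite and admits
a special partial matching. -/
def IsPircon (P : Type*) [PartialOrder P] : Prop :=
  ∀ x : P, ¬ IsMin x → (Set.Iic x).Finite ∧ ∃ M : P → P, IsSPMOn x M

/-- A pircon system `(P,S)`: `S` is a set of quasi special partial matchings of `P` such
that every `w ≠ ⊥` is matched downwards by some `M ∈ S`. -/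
def IsPirconSystem {P : Type*} [PartialOrder P] [OrderBot P] (S : Set (P → P)) : Prop :=
  (∀ M ∈ S, IsQSPM M) ∧ ∀ w : P, w ≠ ⊥ → ∃ M ∈ S, M w ⋖ w

/-- The defining properties of the family of Kazhdan--Lusztig `R^x`-polynomials of a
pircon system `(P,S)`, where `x ∈ {q,-1} ⊆ ℤ[q]` (here `q` is the variable `X`). -/
def IsKLRFamily {P : Type*} [PartialOrder P] (S : Set (P → P)) (x : Polynomial ℤ)
    (R : P → P → Polynomial ℤ) : Prop :=
  (∀ u w : P, ¬ u ≤ w → R u w = 0) ∧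
  (∀ w : P, R w w = 1) ∧
  ∀ M ∈ S, ∀ u w : P, M w ⋖ w →
    (M u ⋖ u → R u w = R (M u) (M w)) ∧
    (u ⋖ M u → R u w = (X - 1) * R u (M w) + X * R (M u) (M w)) ∧
    (M u = u → R u w = (X - 1 - x) * R u (M w))

/-- The up-down symmetry for a family of Kazhdan--Lusztig `R^x`-polynomials. -/
def UpDownSymmetry {P : Type*} [PartialOrder P] (S : Set (P → P)) (x : Polynomial ℤ)
    (R : P → P → Polynomial ℤ) : Prop :=
  ∀ M ∈ S, ∀ u w : P, u ⋖ M u →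
    (w ⋖ M w → R u w = R (M u) (M w)) ∧
    (M w ⋖ w → R u w = (X - 1) * R (M u) w + X * R (M u) (M w)) ∧
    (M w = w → R u w = (X - 1 - x) * R (M u) w)

/-!  The ring `A = ℤ[q^{1/2}, q^{-1/2}]` is realized as `LaurentPolynomial ℤ`, with
`q^{1/2} = T 1` and hence `q = T 2`; the bar involution `q^{1/2} ↦ q^{-1/2}` is
`LaurentPolynomial.invert`.  The free `A`-module `𝓜_P = ⊕_{u ∈ P} A·m_u` is realized as
the finitely supported elements of `P → A`, the basis element `m_u` corresponding to the
indicator of `u`. -/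

/-- Evaluation of a polynomial in `q` at `q = T 2`, i.e. the inclusion
`ℤ[q] → ℤ[q^{1/2}, q^{-1/2}]`. -/
def evq (p : Polynomial ℤ) : LaurentPolynomial ℤ :=
  Polynomial.aeval (T 2 : LaurentPolynomial ℤ) p

open Classical in
/-- The `y`-action of the operator `T_M` on `𝓜_P`, written in coordinates:
`T_M(m_v) = m_{M v}` if `v ⋖ M v`; `T_M(m_v) = q·m_{M v} + (q-1)·m_v` if `M v ⋖ v`;
and `T_M(m_v) = y·m_v` if `M v = v`. -/
def TMact {P : Type*} [PartialOrder P] (M : P → P) (y : LaurentPolynomial ℤ)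
    (f : P → LaurentPolynomial ℤ) : P → LaurentPolynomial ℤ := fun u =>
  if M u = u then y * f u
  else if M u < u then f (M u) + (T 2 - 1) * f u
  else T 2 * f (M u)

/-- The map `ι^x` on `𝓜_P`, written in coordinates:
`ι^x(Σ_v f_v·m_v) = Σ_v f̄_v·q^{-ρ(v)}·Σ_{u} (-1)^{ρ(u,v)}·R^x_{u,v}(q)·m_u`. -/
def iotaAct {P : Type*} [PartialOrder P] (ρ : P → ℕ) (R : P → P → Polynomial ℤ)
    (f : P → LaurentPolynomial ℤ) : P → LaurentPolynomial ℤ := fun u =>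
  ∑ᶠ v : P, invert (f v) * (T (-2 * (ρ v : ℤ)) * ((-1) ^ (ρ v - ρ u) * evq (R u v)))

/-- The involution `j_P` of `𝓜_P`: `j_P(a·m_w) = ā·(-q^{-1})^{ρ(w)}·m_w`. -/
def jPact {P : Type*} [PartialOrder P] (ρ : P → ℕ) (f : P → LaurentPolynomial ℤ) :
    P → LaurentPolynomial ℤ := fun w => invert (f w) * (-T (-2)) ^ (ρ w)

/-- `deg f < k/2`. -/
def DegLtHalf (f : Polynomial ℤ) (k : ℤ) : Prop :=
  f = 0 ∨ 2 * (f.natDegree : ℤ) < k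

/-- The Kazhdan--Lusztig--Stanley polynomials of the kernel `(R_{u,w})`: `P_{u,w} = 0`
unless `u ≤ w`, `P_{w,w} = 1`, `deg P_{u,w} < ρ(u,w)/2` for `u < w`, and
`q^{ρ(u,w)}·P_{u,w}(q⁻¹) = Σ_{u ≤ t ≤ w} R_{u,t}(q)·P_{t,w}(q)`. -/
def IsKLSFamily {P : Type*} [PartialOrder P] (ρ : P → ℕ)
    (R Pp : P → P → Polynomial ℤ) : Prop :=
  (∀ u w : P, ¬ u ≤ w → Pp u w = 0) ∧
  (∀ w : P, Pp w w = 1) ∧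
  (∀ u w : P, u < w → DegLtHalf (Pp u w) ((ρ w : ℤ) - (ρ u : ℤ))) ∧
  ∀ u w : P, u ≤ w →
    T (2 * ((ρ w : ℤ) - (ρ u : ℤ))) * invert (evq (Pp u w)) =
      ∑ᶠ t ∈ Set.Icc u w, evq (R u t) * evq (Pp t w)

/-- The Kazhdan--Lusztig element `C^x_w ∈ 𝓜_P`, in coordinates: its coefficient on `m_v`
is `q^{ρ(w)/2}·(-1)^{ρ(v,w)}·q^{-ρ(v)}·P^x_{v,w}(q^{-1})`. -/
def Cel {P : Type*} [PartialOrder P] (ρ : P → ℕ) (Pp : P → P → Polynomial ℤ) (w : P) :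
    P → LaurentPolynomial ℤ := fun v =>
  T (ρ w : ℤ) * ((-1) ^ (ρ w - ρ v) * (T (-2 * (ρ v : ℤ)) * invert (evq (Pp v w))))

/-- The Kazhdan--Lusztig element `C'^x_w ∈ 𝓜_P`, in coordinates: its coefficient on
`m_v` is `q^{-ρ(w)/2}·P^z_{v,w}(q)` (the family `Pp` fed here is `P^z`). -/
def Cel' {P : Type*} [PartialOrder P] (ρ : P → ℕ) (Pp : P → P → Polynomial ℤ) (w : P) :
    P → LaurentPolynomial ℤ := fun v =>
  T (-(ρ w : ℤ)) * evq (Pp v w)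

/-!
For `M ∈ S` the operator `T_M` is invertible with `T_M⁻¹ = q⁻¹ T_M + (q⁻¹ - 1)`, and the
recursion for `R^x` together with the up-down symmetry says exactly that
`ι^x ∘ T_M = T_M⁻¹ ∘ ι^x`; by semilinearity it suffices to compare coefficients on basis
vectors, a nine-case check according to how `M` moves `u` and `v`. Since `ι^x` is
semilinear for the bar involution, also `ι^x ∘ T_M⁻¹ = T_M ∘ ι^x`. Then by induction on
`ρ(w)`: for a minimal `w`, `ι^x(m_w) = q^{-ρ(w)} m_w`; otherwise pick `M ∈ S` with
`M(w) ⋖ w`, so `m_w = T_M(m_{M(w)})` and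
`ι^x ι^x m_w = ι^x T_M⁻¹ ι^x m_{M(w)} = T_M ι^x ι^x m_{M(w)} = T_M m_{M(w)} = m_w`.
Semilinearity extends `ι^x ∘ ι^x = id` from the basis to all of `𝓜_P`.
-/

open Function

theorem LaurentPolynomial.T_mul_T_neg {R : Type*} [Semiring R] (n : ℤ) :
    (T n * T (-n) : R[T;T⁻¹]) = 1 := by
  rw [← T_add, add_neg_cancel, T_zero]

theorem neg_one_pow_sub_of_le {R : Type*} [Ring R] {a b : ℕ} (h : a ≤ b) :
    (-1 : R) ^ (b - a) = (-1) ^ a * (-1) ^ b := by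
  obtain ⟨c, rfl⟩ := exists_add_of_le h
  rw [add_tsub_cancel_left, pow_add, ← mul_assoc, ← pow_add, ← two_mul, pow_mul, neg_one_sq,
    one_pow, one_mul]

theorem IsPircon.finite_Iic {P : Type*} [PartialOrder P] (hP : IsPircon P) (v : P) :
    (Set.Iic v).Finite := by
  by_cases hv : IsMin v
  · exact (Set.finite_singleton v).subset fun _ hu => hv.eq_of_le hu
  · exact (hP v hv).1

theorem monotone_of_forall_covBy_eq_add_one {P : Type*} [PartialOrder P]
    (hfin : ∀ v : P, (Set.Iic v).Finite) {ρ : P → ℕ} (hρ : ∀ a b : P, a ⋖ b → ρ b = ρ a + 1) :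
    Monotone ρ := by
  let _ : LocallyFiniteOrder P :=
    LocallyFiniteOrder.ofFiniteIcc fun _ b => (hfin b).subset Set.Icc_subset_Iic_self
  exact (monotone_iff_forall_covBy ρ).2 fun a b h => (hρ a b h).symm ▸ Nat.le_succ _

theorem Pi.hasFiniteSupport_single {ι M : Type*} [DecidableEq ι] [Zero M] (i : ι) (a : M) :
    (Pi.single i a).HasFiniteSupport :=
  (Set.finite_singleton i).subset Pi.support_single_subset

theorem eq_of_map_add_of_map_smul {ι R N : Type*} [DecidableEq ι] [Semiring R] [AddCommGroup N]
    [Module R N] {σ : R → R} {F G : (ι → R) → N}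
    (hFadd : ∀ f g : ι → R, f.HasFiniteSupport → g.HasFiniteSupport → F (f + g) = F f + F g)
    (hGadd : ∀ f g : ι → R, f.HasFiniteSupport → g.HasFiniteSupport → G (f + g) = G f + G g)
    (hFsmul : ∀ (c : R) (f : ι → R), f.HasFiniteSupport → F (c • f) = σ c • F f)
    (hGsmul : ∀ (c : R) (f : ι → R), f.HasFiniteSupport → G (c • f) = σ c • G f)
    (hsingle : ∀ i, F (Pi.single i 1) = G (Pi.single i 1)) {f : ι → R}
    (hf : f.HasFiniteSupport) : F f = G f := by
  have map_zero_of_add : ∀ H : (ι → R) → N, (∀ f g : ι → R, f.HasFiniteSupport →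
      g.HasFiniteSupport → H (f + g) = H f + H g) → H 0 = 0 := fun H hH => by
    simpa using hH 0 0 hasFiniteSupport_zero hasFiniteSupport_zero
  rw [← Finsupp.ofSupportFinite_coe (hf := hf)]
  induction Finsupp.ofSupportFinite f hf using Finsupp.induction_linear with
  | zero => rw [Finsupp.coe_zero, map_zero_of_add F hFadd, map_zero_of_add G hGadd]
  | add f g hf hg =>
    rw [Finsupp.coe_add, hFadd _ _ f.hasFiniteSupport g.hasFiniteSupport,
      hGadd _ _ f.hasFiniteSupport g.hasFiniteSupport, hf, hg]
  | single i c =>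
    have hδ := Pi.hasFiniteSupport_single i (1 : R)
    rw [Finsupp.single_eq_pi_single, ← mul_one c, ← smul_eq_mul, Pi.single_smul', hFsmul _ _ hδ,
      hGsmul _ _ hδ, hsingle]

section Iota

variable {P : Type*} [PartialOrder P] {ρ : P → ℕ} {R : P → P → ℤ[X]}

/-- The coefficient of `m_u` in `ι^x(m_v)`, with `(-1)^{ρ(u,v)}` written as
`(-1)^{ρ(u)} (-1)^{ρ(v)}` to avoid the truncated subtraction `ρ v - ρ u`. -/
def iotaKernel (ρ : P → ℕ) (R : P → P → ℤ[X]) (u v : P) : ℤ[T;T⁻¹] :=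
  (-1) ^ ρ u * (-T (-2)) ^ ρ v * evq (R u v)

theorem hasFiniteSupport_invert_mul {α : Type*} {f : α → ℤ[T;T⁻¹]} (hf : f.HasFiniteSupport)
    (k : α → ℤ[T;T⁻¹]) : (fun v => invert (f v) * k v).HasFiniteSupport :=
  (hf.fun_comp (map_zero invert)).fun_mul_left k

theorem hasFiniteSupport_iotaAct (hfin : ∀ v : P, (Set.Iic v).Finite)
    (hR0 : ∀ u w : P, ¬ u ≤ w → R u w = 0) {f : P → ℤ[T;T⁻¹]} (hf : f.HasFiniteSupport) :
    (iotaAct ρ R f).HasFiniteSupport := by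
  refine (Set.Finite.biUnion hf fun v _ => hfin v).subset fun u hu => ?_
  by_contra hu'
  refine hu (finsum_eq_zero_of_forall_eq_zero fun v => ?_)
  by_cases hv : f v = 0
  · simp [hv]
  · simp [hR0 u v fun huv => hu' (Set.mem_biUnion hv huv), evq]

theorem iotaAct_add {f g : P → ℤ[T;T⁻¹]} (hf : f.HasFiniteSupport) (hg : g.HasFiniteSupport) :
    iotaAct ρ R (f + g) = iotaAct ρ R f + iotaAct ρ R g := by
  funext u
  simp only [iotaAct, Pi.add_apply, map_add, add_mul]
  exact finsum_add_distrib (hasFiniteSupport_invert_mul hf _) (hasFiniteSupport_invert_mul hg _)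

theorem iotaAct_smul (c : ℤ[T;T⁻¹]) {f : P → ℤ[T;T⁻¹]} (hf : f.HasFiniteSupport) :
    iotaAct ρ R (c • f) = invert c • iotaAct ρ R f := by
  funext u
  simp only [iotaAct, Pi.smul_apply, smul_eq_mul, map_mul, mul_assoc]
  exact (mul_finsum' _ _ (hasFiniteSupport_invert_mul hf _)).symm

theorem iotaAct_single_apply [DecidableEq P] (hmono : Monotone ρ)
    (hR0 : ∀ u w : P, ¬ u ≤ w → R u w = 0) (v : P) (c : ℤ[T;T⁻¹]) (u : P) :
    iotaAct ρ R (Pi.single v c) u = invert c * iotaKernel ρ R u v := by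
  rw [iotaAct, finsum_eq_single _ v fun w hw => by rw [Pi.single_eq_of_ne hw, map_zero, zero_mul],
    Pi.single_eq_same, iotaKernel]
  by_cases huv : u ≤ v
  · rw [neg_one_pow_sub_of_le (hmono huv), neg_pow (T (-2) : ℤ[T;T⁻¹]), T_pow, mul_comm (-2 : ℤ)]
    ring
  · simp [hR0 u v huv, evq]

theorem iotaAct_single_of_isMin [DecidableEq P] (hmono : Monotone ρ)
    (hR0 : ∀ u w : P, ¬ u ≤ w → R u w = 0) (hR1 : ∀ w : P, R w w = 1) {w : P} (hw : IsMin w)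
    (c : ℤ[T;T⁻¹]) : iotaAct ρ R (Pi.single w c) = Pi.single w (invert c * T (-2) ^ ρ w) := by
  funext u
  rw [iotaAct_single_apply hmono hR0]
  rcases eq_or_ne u w with rfl | hu
  · rw [Pi.single_eq_same, iotaKernel, hR1, evq, map_one, mul_one, ← mul_pow, neg_one_mul, neg_neg]
  · rw [Pi.single_eq_of_ne hu, iotaKernel, hR0 u w fun h => hu (hw.eq_of_le h), evq, map_zero,
      mul_zero, mul_zero]

theorem iotaAct_iotaAct_single_of_isMin [DecidableEq P] (hmono : Monotone ρ)
    (hR0 : ∀ u w : P, ¬ u ≤ w → R u w = 0) (hR1 : ∀ w : P, R w w = 1) {w : P} (hw : IsMin w) :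
    iotaAct ρ R (iotaAct ρ R (Pi.single w 1)) = Pi.single w 1 := by
  rw [iotaAct_single_of_isMin hmono hR0 hR1 hw, iotaAct_single_of_isMin hmono hR0 hR1 hw,
    map_one, one_mul, map_pow, invert_T, neg_neg, ← mul_pow, T_mul_T_neg, one_pow]

end Iota

section TM

variable {P : Type*} [PartialOrder P] {M : P → P} {y : ℤ[T;T⁻¹]} {f g : P → ℤ[T;T⁻¹]} {u v : P}

theorem TMact_apply_of_eq (h : M u = u) : TMact M y f u = y * f u := if_pos h

theorem TMact_apply_of_lt (h : M u < u) : TMact M y f u = f (M u) + (T 2 - 1) * f u := by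
  rw [TMact, if_neg h.ne, if_pos h]

theorem TMact_apply_of_gt (h : u < M u) : TMact M y f u = T 2 * f (M u) := by
  rw [TMact, if_neg h.ne', if_neg (lt_asymm h)]

theorem TMact_apply_eq_zero (hu : f u = 0) (hMu : f (M u) = 0) : TMact M y f u = 0 := by
  simp [TMact, hu, hMu]

theorem TMact_add : TMact M y (f + g) = TMact M y f + TMact M y g := by
  funext u
  simp only [TMact, Pi.add_apply]
  split_ifs <;> ring

theorem TMact_smul (c : ℤ[T;T⁻¹]) : TMact M y (c • f) = c • TMact M y f := by
  funext u
  simp only [TMact, Pi.smul_apply, smul_eq_mul]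
  split_ifs <;> ring

theorem hasFiniteSupport_TMact (hM : Involutive M) (hf : f.HasFiniteSupport) :
    (TMact M y f).HasFiniteSupport := by
  refine (Set.Finite.union hf (Set.Finite.preimage hM.injective.injOn hf)).subset fun u hu => ?_
  by_contra h
  simp only [Set.mem_union, Set.mem_preimage, mem_support, not_or, not_not] at h
  exact hu (TMact_apply_eq_zero h.1 h.2)

variable [DecidableEq P]

theorem TMact_single_of_eq (hM : Involutive M) (hv : M v = v) :
    TMact M y (Pi.single v 1) = Pi.single v y := by
  funext u
  rcases eq_or_ne u v with rfl | hu
  · rw [TMact_apply_of_eq hv, Pi.single_eq_same, Pi.single_eq_same, mul_one]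
  · have hMu : M u ≠ v := fun h => hu (by rw [← hv, ← h, hM u])
    rw [TMact_apply_eq_zero (Pi.single_eq_of_ne hu 1) (Pi.single_eq_of_ne hMu 1),
      Pi.single_eq_of_ne hu]

theorem TMact_single_of_lt (hM : Involutive M) (hv : v < M v) :
    TMact M y (Pi.single v 1) = Pi.single (M v) 1 := by
  funext u
  rcases eq_or_ne u v with rfl | hu
  · rw [TMact_apply_of_gt hv, Pi.single_eq_of_ne hv.ne', Pi.single_eq_of_ne hv.ne, mul_zero]
  rcases eq_or_ne u (M v) with rfl | hu'
  · rw [TMact_apply_of_lt (by rwa [hM v]), hM v, Pi.single_eq_same, Pi.single_eq_same,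
      Pi.single_eq_of_ne hu, mul_zero, add_zero]
  · have hMu : M u ≠ v := fun h => hu' (by rw [← h, hM u])
    rw [TMact_apply_eq_zero (Pi.single_eq_of_ne hu 1) (Pi.single_eq_of_ne hMu 1),
      Pi.single_eq_of_ne hu']

theorem TMact_single_of_gt (hM : Involutive M) (hv : M v < v) :
    TMact M y (Pi.single v 1) = Pi.single (M v) (T 2) + Pi.single v (T 2 - 1) := by
  funext u
  rw [Pi.add_apply]
  rcases eq_or_ne u v with rfl | hu
  · rw [TMact_apply_of_lt hv, Pi.single_eq_of_ne hv.ne, Pi.single_eq_same,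
      Pi.single_eq_of_ne hv.ne', Pi.single_eq_same]
    ring
  rcases eq_or_ne u (M v) with rfl | hu'
  · rw [TMact_apply_of_gt (by rwa [hM v]), hM v, Pi.single_eq_same, Pi.single_eq_same,
      Pi.single_eq_of_ne hu, mul_one, add_zero]
  · have hMu : M u ≠ v := fun h => hu' (by rw [← h, hM u])
    rw [TMact_apply_eq_zero (Pi.single_eq_of_ne hu 1) (Pi.single_eq_of_ne hMu 1),
      Pi.single_eq_of_ne hu', Pi.single_eq_of_ne hu, add_zero]

end TM

section TMinv

variable {P : Type*} [PartialOrder P] {M : P → P} {y : ℤ[T;T⁻¹]} {f g : P → ℤ[T;T⁻¹]} {u : P}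

/-- `q⁻¹ T_M + (q⁻¹ - 1)`, the inverse of `T_M` by the quadratic relation
`T_M² = (q - 1) T_M + q` on matched pairs; on `M`-fixed points it is multiplication by
`q⁻¹ y + q⁻¹ - 1`, which equals `y⁻¹ = ȳ` exactly when `y ∈ {q, -1}`. -/
def TMinvAct (M : P → P) (y : ℤ[T;T⁻¹]) (g : P → ℤ[T;T⁻¹]) : P → ℤ[T;T⁻¹] :=
  (T (-2) : ℤ[T;T⁻¹]) • TMact M y g + (T (-2) - 1 : ℤ[T;T⁻¹]) • g

theorem TMinvAct_apply_of_eq (h : M u = u) :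
    TMinvAct M y g u = (T (-2) * y + (T (-2) - 1)) * g u := by
  simp only [TMinvAct, Pi.add_apply, Pi.smul_apply, smul_eq_mul, TMact_apply_of_eq h]
  ring

theorem TMinvAct_apply_of_lt (h : M u < u) : TMinvAct M y g u = T (-2) * g (M u) := by
  simp only [TMinvAct, Pi.add_apply, Pi.smul_apply, smul_eq_mul, TMact_apply_of_lt h]
  linear_combination g u * T_mul_T_neg (R := ℤ) 2

theorem TMinvAct_apply_of_gt (h : u < M u) :
    TMinvAct M y g u = g (M u) + (T (-2) - 1) * g u := by
  simp only [TMinvAct, Pi.add_apply, Pi.smul_apply, smul_eq_mul, TMact_apply_of_gt h]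
  linear_combination g (M u) * T_mul_T_neg (R := ℤ) 2

theorem TMinvAct_add : TMinvAct M y (f + g) = TMinvAct M y f + TMinvAct M y g := by
  rw [TMinvAct, TMact_add, TMinvAct, TMinvAct]
  module

theorem TMinvAct_smul (c : ℤ[T;T⁻¹]) : TMinvAct M y (c • g) = c • TMinvAct M y g := by
  rw [TMinvAct, TMact_smul, TMinvAct]
  module

end TMinv

theorem invert_evq {x : ℤ[X]} (hx : x = X ∨ x = -1) :
    invert (evq x) = T (-2) * evq x + (T (-2) - 1) := by
  rcases hx with rfl | rfl
  · simp only [evq, aeval_X, invert_T]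
    linear_combination -T_mul_T_neg (R := ℤ) 2
  · simp only [evq, map_neg, map_one]
    ring

theorem evq_quadratic {x : ℤ[X]} (hx : x = X ∨ x = -1) : (evq x - T 2) * (evq x + 1) = 0 := by
  rcases hx with rfl | rfl <;> simp [evq]

section Intertwining

variable {P : Type*} [PartialOrder P] [DecidableEq P] {ρ : P → ℕ} {S : Set (P → P)} {x : ℤ[X]}
  {R : P → P → ℤ[X]} {M : P → P} {v : P}

theorem iotaAct_TMact_single_of_eq (hmono : Monotone ρ) (hρ : ∀ a b : P, a ⋖ b → ρ b = ρ a + 1)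
    (hx : x = X ∨ x = -1) (hR0 : ∀ u w : P, ¬ u ≤ w → R u w = 0) (hud : UpDownSymmetry S x R)
    (hMS : M ∈ S) (hMQ : IsQSPM M) (hv : M v = v) :
    iotaAct ρ R (TMact M (evq x) (Pi.single v 1)) =
      TMinvAct M (evq x) (iotaAct ρ R (Pi.single v 1)) := by
  obtain ⟨hinv, htri, -⟩ := hMQ
  have hq := T_mul_T_neg (R := ℤ) 2
  have hy := evq_quadratic hx
  funext u
  rw [TMact_single_of_eq hinv hv, iotaAct_single_apply hmono hR0, invert_evq hx]
  rcases htri u with hu | hu | hu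
  · have h := (hud M hMS (M u) v (by rwa [hinv u])).2.2 hv
    rw [hinv u] at h
    rw [TMinvAct_apply_of_lt hu.lt, iotaAct_single_apply hmono hR0, iotaKernel, iotaKernel, h,
      hρ _ _ hu]
    simp only [evq, map_mul, map_sub, map_one, aeval_X] at hy ⊢
    linear_combination (-((-1) ^ ρ (M u) * (-T (-2)) ^ ρ v * aeval (T 2) (R u v))) * hq
  · rw [TMinvAct_apply_of_eq hu, iotaAct_single_apply hmono hR0, map_one, one_mul]
  · have h := (hud M hMS u v hu).2.2 hv
    rw [TMinvAct_apply_of_gt hu.lt, iotaAct_single_apply hmono hR0, iotaAct_single_apply hmono hR0,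
      iotaKernel, iotaKernel, h, hρ _ _ hu]
    simp only [evq, map_mul, map_sub, map_one, aeval_X] at hy ⊢
    linear_combination (-(T (-2) * (-1) ^ ρ u * (-T (-2)) ^ ρ v * aeval (T 2) (R (M u) v))) * hy
      - (-1) ^ ρ u * (-T (-2)) ^ ρ v * aeval (T 2) (R (M u) v) * hq

theorem iotaAct_TMact_single_of_lt (hmono : Monotone ρ) (hρ : ∀ a b : P, a ⋖ b → ρ b = ρ a + 1)
    (hR : IsKLRFamily S x R) (hMS : M ∈ S) (hMQ : IsQSPM M) (hv : v ⋖ M v) :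
    iotaAct ρ R (TMact M (evq x) (Pi.single v 1)) =
      TMinvAct M (evq x) (iotaAct ρ R (Pi.single v 1)) := by
  obtain ⟨hinv, htri, -⟩ := hMQ
  obtain ⟨hR0, -, hrec⟩ := hR
  have hq := T_mul_T_neg (R := ℤ) 2
  have hrec := fun u => hrec M hMS u (M v) (by rwa [hinv v])
  funext u
  rw [TMact_single_of_lt hinv hv.lt, iotaAct_single_apply hmono hR0]
  rcases htri u with hu | hu | hu
  · rw [TMinvAct_apply_of_lt hu.lt, iotaAct_single_apply hmono hR0, iotaKernel, iotaKernel,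
      (hrec u).1 hu, hinv v, hρ _ _ hu, hρ _ _ hv]
    ring
  · rw [TMinvAct_apply_of_eq hu, iotaAct_single_apply hmono hR0, iotaKernel, iotaKernel,
      (hrec u).2.2 hu, hinv v, hρ _ _ hv]
    simp only [evq, map_mul, map_sub, map_one, aeval_X]
    linear_combination (-((-1) ^ ρ u * (-T (-2)) ^ ρ v * aeval (T 2) (R u v))) * hq
  · rw [TMinvAct_apply_of_gt hu.lt, iotaAct_single_apply hmono hR0, iotaAct_single_apply hmono hR0,
      iotaKernel, iotaKernel, iotaKernel, (hrec u).2.1 hu, hinv v, hρ _ _ hu, hρ _ _ hv]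
    simp only [evq, map_mul, map_sub, map_add, map_one, aeval_X]
    linear_combination (-((-1) ^ ρ u * (-T (-2)) ^ ρ v *
      (aeval (T 2) (R u v) + aeval (T 2) (R (M u) v)))) * hq

theorem iotaAct_TMact_single_of_gt (hmono : Monotone ρ) (hρ : ∀ a b : P, a ⋖ b → ρ b = ρ a + 1)
    (hx : x = X ∨ x = -1) (hR : IsKLRFamily S x R) (hud : UpDownSymmetry S x R) (hMS : M ∈ S)
    (hMQ : IsQSPM M) (hv : M v ⋖ v) :
    iotaAct ρ R (TMact M (evq x) (Pi.single v 1)) =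
      TMinvAct M (evq x) (iotaAct ρ R (Pi.single v 1)) := by
  obtain ⟨hinv, htri, -⟩ := hMQ
  obtain ⟨hR0, -, hrec⟩ := hR
  have hq := T_mul_T_neg (R := ℤ) 2
  have hy := evq_quadratic hx
  funext u
  rw [TMact_single_of_gt hinv hv.lt,
    iotaAct_add (Pi.hasFiniteSupport_single _ _) (Pi.hasFiniteSupport_single _ _), Pi.add_apply,
    iotaAct_single_apply hmono hR0, iotaAct_single_apply hmono hR0, invert_T, map_sub, invert_T,
    map_one]
  rcases htri u with hu | hu | hu
  · have h := (hud M hMS (M u) v (by rwa [hinv u])).2.1 hv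
    rw [TMinvAct_apply_of_lt hu.lt, iotaAct_single_apply hmono hR0, iotaKernel, iotaKernel,
      iotaKernel, h, hinv u, hρ _ _ hu, hρ _ _ hv]
    simp only [evq, map_mul, map_sub, map_add, map_one, aeval_X]
    linear_combination T (-2) * (-1) ^ ρ (M u) * (-T (-2)) ^ ρ (M v) *
      (aeval (T 2) (R u (M v)) + aeval (T 2) (R u v)) * hq
  · have h := (hrec M hMS u v hv).2.2 hu
    rw [TMinvAct_apply_of_eq hu, iotaAct_single_apply hmono hR0, iotaKernel, iotaKernel, h,
      hρ _ _ hv]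
    simp only [evq, map_mul, map_sub, map_one, aeval_X] at hy ⊢
    linear_combination
      (-(T (-2) ^ 2 * (-1) ^ ρ u * (-T (-2)) ^ ρ (M v) * aeval (T 2) (R u (M v)))) * hy -
        T (-2) * (-1) ^ ρ u * (-T (-2)) ^ ρ (M v) * aeval (T 2) (R u (M v)) * hq
  · have h := (hud M hMS u (M v) hu).1 (by rwa [hinv v])
    rw [TMinvAct_apply_of_gt hu.lt, iotaAct_single_apply hmono hR0, iotaAct_single_apply hmono hR0,
      iotaKernel, iotaKernel, iotaKernel, h, hinv v, hρ _ _ hu, hρ _ _ hv, map_one, one_mul]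
    linear_combination

end Intertwining

section Involution

variable {P : Type*} [PartialOrder P] {ρ : P → ℕ} {S : Set (P → P)} {x : ℤ[X]}
  {R : P → P → ℤ[X]} {M : P → P}

theorem iotaAct_TMact (hmono : Monotone ρ) (hρ : ∀ a b : P, a ⋖ b → ρ b = ρ a + 1)
    (hx : x = X ∨ x = -1) (hR : IsKLRFamily S x R) (hud : UpDownSymmetry S x R) (hMS : M ∈ S)
    (hMQ : IsQSPM M) {f : P → ℤ[T;T⁻¹]} (hf : f.HasFiniteSupport) :
    iotaAct ρ R (TMact M (evq x) f) = TMinvAct M (evq x) (iotaAct ρ R f) := by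
  classical
  have hT {g : P → ℤ[T;T⁻¹]} (hg : g.HasFiniteSupport) : (TMact M (evq x) g).HasFiniteSupport :=
    hasFiniteSupport_TMact hMQ.1 hg
  refine eq_of_map_add_of_map_smul (σ := invert) (F := fun f => iotaAct ρ R (TMact M (evq x) f))
    (G := fun f => TMinvAct M (evq x) (iotaAct ρ R f)) (fun f g hf hg => ?_) (fun f g hf hg => ?_)
    (fun c f hf => ?_) (fun c f hf => ?_) (fun v => ?_) hf
  · simp only [TMact_add, iotaAct_add (hT hf) (hT hg)]
  · simp only [iotaAct_add hf hg, TMinvAct_add]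
  · simp only [TMact_smul, iotaAct_smul c (hT hf)]
  · simp only [iotaAct_smul c hf, TMinvAct_smul]
  · rcases hMQ.2.1 v with hv | hv | hv
    · exact iotaAct_TMact_single_of_gt hmono hρ hx hR hud hMS hMQ hv
    · exact iotaAct_TMact_single_of_eq hmono hρ hx hR.1 hud hMS hMQ hv
    · exact iotaAct_TMact_single_of_lt hmono hρ hR hMS hMQ hv

theorem iotaAct_TMinvAct (hmono : Monotone ρ) (hρ : ∀ a b : P, a ⋖ b → ρ b = ρ a + 1)
    (hx : x = X ∨ x = -1) (hR : IsKLRFamily S x R) (hud : UpDownSymmetry S x R) (hMS : M ∈ S)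
    (hMQ : IsQSPM M) {g : P → ℤ[T;T⁻¹]} (hg : g.HasFiniteSupport) :
    iotaAct ρ R (TMinvAct M (evq x) g) = TMact M (evq x) (iotaAct ρ R g) := by
  have hTg : (TMact M (evq x) g).HasFiniteSupport := hasFiniteSupport_TMact hMQ.1 hg
  rw [TMinvAct, iotaAct_add (Set.Finite.subset hTg (support_const_smul_subset _ _))
    (Set.Finite.subset hg (support_const_smul_subset _ _)), iotaAct_smul _ hTg, iotaAct_smul _ hg,
    iotaAct_TMact hmono hρ hx hR hud hMS hMQ hg, TMinvAct]
  funext u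
  simp only [Pi.add_apply, Pi.smul_apply, smul_eq_mul, map_sub, map_one, invert_T, neg_neg]
  linear_combination
    (TMact M (evq x) (iotaAct ρ R g) u + iotaAct ρ R g u) * T_mul_T_neg (R := ℤ) 2

theorem iotaAct_iotaAct_single [OrderBot P] [DecidableEq P] (hfin : ∀ v : P, (Set.Iic v).Finite)
    (hρ : ∀ a b : P, a ⋖ b → ρ b = ρ a + 1) (hS : IsPirconSystem S) (hx : x = X ∨ x = -1)
    (hR : IsKLRFamily S x R) (hud : UpDownSymmetry S x R) (w : P) :
    iotaAct ρ R (iotaAct ρ R (Pi.single w 1)) = Pi.single w 1 := by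
  have hmono := monotone_of_forall_covBy_eq_add_one hfin hρ
  induction hn : ρ w using Nat.strong_induction_on generalizing w with
  | _ n ih =>
  rcases eq_or_ne w ⊥ with rfl | hw
  · exact iotaAct_iotaAct_single_of_isMin hmono hR.1 hR.2.1 isMin_bot
  obtain ⟨M, hMS, hMw⟩ := hS.2 w hw
  have hMQ := hS.1 M hMS
  have hδ : TMact M (evq x) (Pi.single (M w) 1) = Pi.single w 1 := by
    rw [TMact_single_of_lt hMQ.1 (by rw [hMQ.1 w]; exact hMw.lt), hMQ.1 w]
  have hιδ := hasFiniteSupport_iotaAct (ρ := ρ) hfin hR.1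
    (Pi.hasFiniteSupport_single (M w) (1 : ℤ[T;T⁻¹]))
  calc iotaAct ρ R (iotaAct ρ R (Pi.single w 1))
      = iotaAct ρ R (TMinvAct M (evq x) (iotaAct ρ R (Pi.single (M w) 1))) := by
        rw [← hδ, iotaAct_TMact hmono hρ hx hR hud hMS hMQ (Pi.hasFiniteSupport_single _ _)]
    _ = TMact M (evq x) (iotaAct ρ R (iotaAct ρ R (Pi.single (M w) 1))) :=
        iotaAct_TMinvAct hmono hρ hx hR hud hMS hMQ hιδ
    _ = Pi.single w 1 := by rw [ih (ρ (M w)) (by rw [← hn, hρ _ _ hMw]; omega) (M w) rfl, hδ]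

end Involution

theorem iota_involutive_general {P : Type*} [PartialOrder P] [OrderBot P]
    (ρ : P → ℕ) (hρcov : ∀ a b : P, a ⋖ b → ρ b = ρ a + 1)
    (hP : IsPircon P) {S : Set (P → P)} (hS : IsPirconSystem S)
    {x : Polynomial ℤ} (hx : x = X ∨ x = -1)
    {R : P → P → Polynomial ℤ} (hR : IsKLRFamily S x R)
    (hud : UpDownSymmetry S x R)
    (m : P → LaurentPolynomial ℤ) (hm : (Function.support m).Finite) :
    iotaAct ρ R (iotaAct ρ R m) = m := by
  classical
  have hfin := hP.finite_Iic
  have hι {f : P → ℤ[T;T⁻¹]} (hf : f.HasFiniteSupport) :=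
    hasFiniteSupport_iotaAct (ρ := ρ) hfin hR.1 hf
  refine eq_of_map_add_of_map_smul (σ := id) (F := fun f => iotaAct ρ R (iotaAct ρ R f)) (G := id)
    (fun f g hf hg => ?_) (fun _ _ _ _ => rfl) (fun c f hf => ?_) (fun _ _ _ => rfl)
    (iotaAct_iotaAct_single hfin hρcov hS hx hR hud) hm
  · simp only [iotaAct_add hf hg, iotaAct_add (hι hf) (hι hg)]
  · simp only [iotaAct_smul c hf, iotaAct_smul _ (hι hf), involutive_invert c, id]

/-- If the family of Kazhdan--Lusztig `R^x`-polynomials of a pircon system `(P,S)`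
satisfies the up-down symmetry, then `ι^x` is an involution of `𝓜_P`. -/
theorem iota_involutive {P : Type*} [PartialOrder P] [OrderBot P]
    (ρ : P → ℕ) (hρ0 : ρ (⊥ : P) = 0) (hρcov : ∀ a b : P, a ⋖ b → ρ b = ρ a + 1)
    (hP : IsPircon P) {S : Set (P → P)} (hS : IsPirconSystem S)
    {x : Polynomial ℤ} (hx : x = X ∨ x = -1)
    {R : P → P → Polynomial ℤ} (hR : IsKLRFamily S x R)
    (hud : UpDownSymmetry S x R)
    (m : P → LaurentPolynomial ℤ) (hm : (Function.support m).Finite) :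
    iotaAct ρ R (iotaAct ρ R m) = m :=
  iota_involutive_general ρ hρcov hP hS hx hR hud m hm

end
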